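/- arXiv:2002.01405 — 3 statements merged into one kernel-verified Lean document; each statement's English description precedes it below -/
import Mathlib

section
/- Let (X,d) be a countable discrete metric space with a partition X = A ⊔ B such that for every R > 0 the sets {x ∈ A : d(x,B) < R} and {x ∈ B : d(x,A) < R} are finite. Write each bounded operator T on ℓ²(X) = ℓ²(A) ⊕ ℓ²(B) as a 2×2 block matrix (T_{ij}). Then for every T ∈ C*_u(X), the off-diagonal blocks T_{12} : ℓ²(B) → ℓ²(A) and T_{21} : ℓ²(A) → ℓ²(B) are compact operators. -/
/-! If the entries `F_{xy}` vanish for `d(x, y) > C`, the rows of the block `P_A F P_B` vanish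
outside the finite set `S = {x ∈ A | d(x, B) < R}` for any `R > C`; hence
`P_A F P_B = P_S (P_A F P_B)` factors through the finite-rank projection `P_S` and is compact.
Since `F ↦ P_A F P_B` is norm-continuous and the compact operators form a closed set,
compactness passes to the norm closure `C*_u(X)`. -/

noncomputable section

/-- `ℓ²(X)` with complex coefficients. -/
abbrev l2 (X : Type*) : Type _ := lp (fun _ : X => ℂ) 2

/-- The standard basis vector `δ_x` of `ℓ²(X)`. -/
noncomputable def delta {X : Type*} (x : X) : l2 X :=
  letI := Classical.decEq X
  lp.single 2 x 1

/-- The matrix entry `F_{xy} = ⟨δ_x, F δ_y⟩` of a bounded operator on `ℓ²(X)`. -/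
noncomputable def entry {X : Type*} (F : l2 X →L[ℂ] l2 X) (x y : X) : ℂ :=
  inner ℂ (delta x) (F (delta y))

/-- `F` has finite propagation: `sup {d(x,y) : F_{xy} ≠ 0} < ∞`. -/
def HasFiniteProp {X : Type*} [MetricSpace X] (F : l2 X →L[ℂ] l2 X) : Prop :=
  ∃ C : ℝ, ∀ x y : X, entry F x y ≠ 0 → dist x y ≤ C

/-- The uniform Roe algebra `C*_u(X)`: the norm closure in `B(ℓ²(X))` of the set of
operators of finite propagation. -/
def uniformRoe (X : Type*) [MetricSpace X] : Set (l2 X →L[ℂ] l2 X) :=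
  closure {F | HasFiniteProp F}

/-- The group of invertible elements of the uniform Roe algebra `C*_u(X)`. -/
def roeGL (X : Type*) [MetricSpace X] : Set (l2 X →L[ℂ] l2 X) :=
  {F | F ∈ uniformRoe X ∧ ∃ G ∈ uniformRoe X, F * G = 1 ∧ G * F = 1}

/-- `X` is a Kuiper space if the group of invertible elements of `C*_u(X)` is
contractible in the norm topology. -/
def IsKuiperSpace (X : Type*) [MetricSpace X] : Prop :=
  ContractibleSpace ↥(roeGL X)

open scoped Classical

open scoped ENNReal

namespace lp

variable {α E : Type*} [NormedAddCommGroup E] {p : ℝ≥0∞} [Fact (1 ≤ p)]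

variable (𝕜 : Type*) [NormedField 𝕜] [NormedSpace 𝕜 E]

/-- On `ℓ²` this is the orthogonal projection `P_s` onto `ℓ²(s)`. -/
def indicatorCLM (s : Set α) : lp (fun _ : α => E) p →L[𝕜] lp (fun _ : α => E) p :=
  LinearMap.mkContinuous
    { toFun f := ⟨s.indicator f, (lp.memℓp f).mono' fun i => norm_indicator_le_norm_self f i⟩
      map_add' f g := lp.ext (s.indicator_add f g)
      map_smul' c f := lp.ext (s.indicator_const_smul c f) }
    1 fun f => by
      rw [one_mul]
      exact lp.norm_mono (zero_lt_one.trans_le Fact.out).ne' fun i =>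
        norm_indicator_le_norm_self f i

@[simp]
theorem coeFn_indicatorCLM (s : Set α) (f : lp (fun _ : α => E) p) :
    ⇑(indicatorCLM 𝕜 s f) = s.indicator f :=
  rfl

theorem indicatorCLM_eq_sum [DecidableEq α] {s : Set α} (hs : s.Finite) :
    indicatorCLM 𝕜 s = ∑ i ∈ hs.toFinset,
      singleContinuousLinearMap 𝕜 (fun _ : α => E) p i ∘L evalCLM 𝕜 (fun _ => E) p i := by
  refine ContinuousLinearMap.ext fun f => lp.ext (funext fun j => ?_)
  simp only [coeFn_indicatorCLM, _root_.sum_apply, lp.coeFn_sum, Finset.sum_apply,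
    ContinuousLinearMap.comp_apply, singleContinuousLinearMap_apply, lp.coeFn_single,
    Finset.sum_pi_single, Set.Finite.mem_toFinset, Set.indicator_apply]
  rfl

theorem isCompactOperator_indicatorCLM [LocallyCompactSpace E] {s : Set α} (hs : s.Finite) :
    IsCompactOperator (indicatorCLM 𝕜 s : lp (fun _ : α => E) p →L[𝕜] _) := by
  rw [indicatorCLM_eq_sum 𝕜 hs]
  refine Submodule.sum_mem (compactOperator (RingHom.id 𝕜) _ _) fun i _ => ?_
  exact (isCompactOperator_of_locallyCompactSpace_dom (evalCLM 𝕜 (fun _ => E) p i)).clm_comp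
    (singleContinuousLinearMap 𝕜 (fun _ => E) p i)

end lp

section l2

variable {X : Type*}

theorem delta_eq_single [DecidableEq X] (x : X) : delta x = lp.single 2 x (1 : ℂ) := by
  unfold delta
  congr
  exact Subsingleton.elim _ _

theorem inner_delta_left (x : X) (f : l2 X) : inner ℂ (delta x) f = f x := by
  simp [delta_eq_single, lp.inner_single_left]

theorem entry_eq_apply (F : l2 X →L[ℂ] l2 X) (x y : X) : entry F x y = F (delta y) x :=
  inner_delta_left x _

theorem ext_delta {F G : l2 X →L[ℂ] l2 X} (h : ∀ y, F (delta y) = G (delta y)) : F = G := by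
  refine lp.ext_continuousLinearMap (by simp) fun y => ContinuousLinearMap.ext_ring ?_
  simpa [delta_eq_single] using h y

theorem indicatorCLM_delta (s : Set X) (y : X) :
    lp.indicatorCLM ℂ s (delta y) = if y ∈ s then delta y else 0 := by
  refine lp.ext (funext fun z => ?_)
  rcases eq_or_ne z y with rfl | hzy
  · by_cases hz : z ∈ s <;> simp [hz]
  · have : delta y z = 0 := by simp [delta_eq_single, Pi.single_eq_of_ne hzy]
    split_ifs <;> simp [this]

theorem indicatorCLM_comp_eq_self {s : Set X} {K : l2 X →L[ℂ] l2 X}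
    (h : ∀ x ∉ s, ∀ y, entry K x y = 0) : lp.indicatorCLM ℂ s ∘L K = K :=
  ext_delta fun y => lp.ext <| funext fun x => by
    by_cases hx : x ∈ s
    · simp [hx]
    · simp [hx, ← entry_eq_apply, h x hx y]

theorem isCompactOperator_of_entry_eq_zero {s : Set X} (hs : s.Finite) {K : l2 X →L[ℂ] l2 X}
    (h : ∀ x ∉ s, ∀ y, entry K x y = 0) : IsCompactOperator K := by
  rw [← indicatorCLM_comp_eq_self h]
  exact (lp.isCompactOperator_indicatorCLM ℂ hs).comp_clm K

def block (A B : Set X) (F : l2 X →L[ℂ] l2 X) : l2 X →L[ℂ] l2 X :=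
  lp.indicatorCLM ℂ A ∘L F ∘L lp.indicatorCLM ℂ B

theorem entry_block (A B : Set X) (F : l2 X →L[ℂ] l2 X) (x y : X) :
    entry (block A B F) x y = if x ∈ A ∧ y ∈ B then entry F x y else 0 := by
  simp only [entry_eq_apply, block, ContinuousLinearMap.comp_apply, indicatorCLM_delta]
  by_cases hx : x ∈ A <;> by_cases hy : y ∈ B <;> simp [hx, hy]

theorem isCompactOperator_block_of_hasFiniteProp [MetricSpace X] {A B : Set X}
    (hA : ∀ R : ℝ, 0 < R → {x ∈ A | Metric.infDist x B < R}.Finite)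
    {F : l2 X →L[ℂ] l2 X} (hF : HasFiniteProp F) : IsCompactOperator (block A B F) := by
  obtain ⟨C, hC⟩ := hF
  refine isCompactOperator_of_entry_eq_zero (hA (max C 0 + 1) (by positivity)) fun x hx y => ?_
  rw [entry_block]
  split_ifs with hxy
  · by_contra hne
    refine hx ⟨hxy.1, ?_⟩
    calc Metric.infDist x B ≤ dist x y := Metric.infDist_le_dist_of_mem hxy.2
      _ ≤ C := hC x y hne
      _ < max C 0 + 1 := by linarith [le_max_left C 0]
  · rfl

theorem isCompactOperator_block_of_mem_uniformRoe [MetricSpace X] {A B : Set X}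
    (hA : ∀ R : ℝ, 0 < R → {x ∈ A | Metric.infDist x B < R}.Finite)
    {T : l2 X →L[ℂ] l2 X} (hT : T ∈ uniformRoe X) : IsCompactOperator (block A B T) := by
  have hclosed : IsClosed {F : l2 X →L[ℂ] l2 X | IsCompactOperator (block A B F)} :=
    isClosed_setOfPred_isCompactOperator.preimage
      (continuous_const.clm_comp (continuous_id.clm_comp continuous_const))
  exact closure_minimal (fun F hF => isCompactOperator_block_of_hasFiniteProp hA hF) hclosed hT

end l2

theorem offdiag_blocks_compact_general (X : Type*) [MetricSpace X] (A B : Set X)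
    (hA : ∀ R : ℝ, 0 < R → {x ∈ A | Metric.infDist x B < R}.Finite)
    (hB : ∀ R : ℝ, 0 < R → {x ∈ B | Metric.infDist x A < R}.Finite)
    (T : l2 X →L[ℂ] l2 X) (hT : T ∈ uniformRoe X) :
    (∃ K : l2 X →L[ℂ] l2 X, IsCompactOperator K ∧
      ∀ x y : X, entry K x y = if x ∈ A ∧ y ∈ B then entry T x y else 0) ∧
    (∃ K : l2 X →L[ℂ] l2 X, IsCompactOperator K ∧
      ∀ x y : X, entry K x y = if x ∈ B ∧ y ∈ A then entry T x y else 0) :=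
  ⟨⟨block A B T, isCompactOperator_block_of_mem_uniformRoe hA hT, entry_block A B T⟩,
    ⟨block B A T, isCompactOperator_block_of_mem_uniformRoe hB hT, entry_block B A T⟩⟩

/-- Let `X = A ⊔ B` be a partition such that for every `R > 0` the
sets `{x ∈ A : d(x,B) < R}` and `{x ∈ B : d(x,A) < R}` are finite. Then for every
`T ∈ C*_u(X)` the off-diagonal blocks `T₁₂ = P_A T P_B` and `T₂₁ = P_B T P_A` (described
here by their matrix entries) are compact operators. -/
theorem offdiag_blocks_compact (X : Type*) [MetricSpace X] [Countable X]
    [DiscreteTopology X] (A B : Set X)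
    (hUnion : A ∪ B = Set.univ) (hDisj : A ∩ B = ∅)
    (hA : ∀ R : ℝ, 0 < R → {x ∈ A | Metric.infDist x B < R}.Finite)
    (hB : ∀ R : ℝ, 0 < R → {x ∈ B | Metric.infDist x A < R}.Finite)
    (T : l2 X →L[ℂ] l2 X) (hT : T ∈ uniformRoe X) :
    (∃ K : l2 X →L[ℂ] l2 X, IsCompactOperator K ∧
      ∀ x y : X, entry K x y = if x ∈ A ∧ y ∈ B then entry T x y else 0) ∧
    (∃ K : l2 X →L[ℂ] l2 X, IsCompactOperator K ∧
      ∀ x y : X, entry K x y = if x ∈ B ∧ y ∈ A then entry T x y else 0) :=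
  offdiag_blocks_compact_general X A B hA hB T hT
end
end

section
/- Let X = ℤ with the metric d(n,m) = |k(n) − k(m)| + 1 for n ≠ m (and d(n,n) = 0), where k(n) = ⌊log₂(|n|+1)⌋ for n ≥ 0 and k(n) = −⌊log₂(|n|+1)⌋ for n < 0. Then (X,d) does not satisfy the Følner property: there exists R > 0 (one may take R = 3) such that every finite nonempty subset F ⊆ X satisfies |∂_R F| ≥ |F|/4. -/
noncomputable section

/-- The level function `k : ℤ → ℤ`, `k(n) = ⌊log₂(|n|+1)⌋` for `n ≥ 0` and
`k(n) = −⌊log₂(|n|+1)⌋` for `n < 0`. -/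
def kLevel (n : ℤ) : ℤ :=
  if 0 ≤ n then (Nat.log 2 (n.natAbs + 1) : ℤ) else -(Nat.log 2 (n.natAbs + 1) : ℤ)

/-- The integers equipped with the metric `d(n,m) = |k(n) − k(m)| + 1` for `n ≠ m`. -/
def ZExp : Type := ℤ

/-- The canonical identification `ℤ → ZExp`. -/
def toZExp (n : ℤ) : ZExp := n

instance : DecidableEq ZExp := inferInstanceAs (DecidableEq ℤ)
instance : Countable ZExp := inferInstanceAs (Countable ℤ)

/-- The metric `d(n,m) = |k(n) − k(m)| + 1` for `n ≠ m`, and `d(n,n) = 0`. -/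
noncomputable instance : MetricSpace ZExp where
  dist n m := if n = m then 0 else ((|kLevel n - kLevel m| : ℤ) : ℝ) + 1
  dist_self n := by simp
  dist_comm n m := by
    rcases eq_or_ne n m with h | h
    · subst h; rfl
    · simp only [if_neg h, if_neg (Ne.symm h), abs_sub_comm]
  dist_triangle a b c := by
    try dsimp only
    rcases eq_or_ne a c with hac | hac
    · rw [if_pos hac]
      have h1 : (0:ℝ) ≤ if a = b then (0:ℝ) else ((|kLevel a - kLevel b| : ℤ) : ℝ) + 1 := by
        split
        · exact le_refl 0
        · positivity
      have h2 : (0:ℝ) ≤ if b = c then (0:ℝ) else ((|kLevel b - kLevel c| : ℤ) : ℝ) + 1 := by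
        split
        · exact le_refl 0
        · positivity
      linarith
    · rw [if_neg hac]
      rcases eq_or_ne a b with hab | hab
      · subst hab
        rw [if_pos rfl, if_neg hac]
        linarith
      · rcases eq_or_ne b c with hbc | hbc
        · subst hbc
          rw [if_neg hab, if_pos rfl]
          linarith
        · rw [if_neg hab, if_neg hbc]
          have h := abs_sub_le (kLevel a) (kLevel b) (kLevel c)
          have h' : ((|kLevel a - kLevel c| : ℤ) : ℝ) ≤
              ((|kLevel a - kLevel b| : ℤ) : ℝ) + ((|kLevel b - kLevel c| : ℤ) : ℝ) := by
            exact_mod_cast h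
          linarith
  eq_of_dist_eq_zero := by
    intro a b h
    by_contra hne
    try dsimp only at h
    rw [if_neg hne] at h
    have h0 : (0:ℝ) ≤ ((|kLevel a - kLevel b| : ℤ) : ℝ) := by positivity
    linarith

/-- The `R`-boundary `∂_R Y = {x ∈ X : d(x,Y) < R, d(x,X∖Y) < R}` of a subset `Y`. -/
def rBoundary {X : Type*} [MetricSpace X] (R : ℝ) (Y : Set X) : Set X :=
  {x : X | Metric.infDist x Y < R ∧ Metric.infDist x Yᶜ < R}

/-- The Følner property: for every `R > 0` and `ε > 0` there is a finite nonempty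
subset `F ⊆ X` with `|∂_R F| < ε·|F|`. -/
def HasFoelnerProp (X : Type*) [MetricSpace X] : Prop :=
  ∀ R : ℝ, 0 < R → ∀ ε : ℝ, 0 < ε → ∃ F : Set X, F.Finite ∧ F.Nonempty ∧
    ((rBoundary R F).ncard : ℝ) < ε * (F.ncard : ℝ)

/-
Let `K` and `m` be the largest and smallest level met by a finite nonempty `F`. Every point of the
levels `K + 1` and `m - 1` lies outside `F` at distance `2` from it, hence in `∂₃ F`. The
nonnegative points of `F` lie in `[0, 2^(K+1) - 1)` and the translation by `2^(K+1) - 1` maps them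
into level `K + 1`; symmetrically the negative ones are translated into level `m - 1`. So
`|F| ≤ |∂₃ F|`: the exponential growth of the levels beats any Følner sequence.
-/

open Bornology Metric

theorem Nat.log_add_pow {b n j : ℕ} (hb : 1 < b) (hn : n < b ^ j) :
    Nat.log b (n + b ^ j) = j := by
  apply Nat.log_eq_of_pow_le_of_lt_pow (by omega)
  rw [pow_succ]
  nlinarith

lemma kLevel_of_nonneg {n : ℤ} (hn : 0 ≤ n) : kLevel n = Nat.log 2 (n.toNat + 1) := by
  rw [kLevel, if_pos hn, show n.natAbs = n.toNat by omega]

lemma kLevel_neg (n : ℤ) : kLevel (-n) = -kLevel n := by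
  unfold kLevel
  rcases lt_trichotomy n 0 with h | rfl | h
  · simp [h.le, h.not_ge, Int.natAbs_neg]
  · simp
  · simp [h.le, h.not_ge, Int.natAbs_neg]

lemma kLevel_nonneg {n : ℤ} (hn : 0 ≤ n) : 0 ≤ kLevel n := by
  rw [kLevel_of_nonneg hn]
  positivity

lemma kLevel_nonpos {n : ℤ} (hn : n ≤ 0) : kLevel n ≤ 0 := by
  have := kLevel_nonneg (neg_nonneg.mpr hn)
  rw [kLevel_neg] at this
  omega

lemma natAbs_kLevel (n : ℤ) : (kLevel n).natAbs = Nat.log 2 (n.natAbs + 1) := by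
  unfold kLevel
  split <;> simp

lemma finite_preimage_kLevel {s : Set ℤ} (hs : s.Finite) : (kLevel ⁻¹' s).Finite := by
  refine hs.preimage' fun j _ => (Set.finite_Icc (-2 ^ (j.natAbs + 1)) (2 ^ (j.natAbs + 1))).subset
    fun n (hn : kLevel n = j) => ?_
  have hlt : n.natAbs + 1 < 2 ^ (j.natAbs + 1) := by
    rw [← hn, natAbs_kLevel]
    exact Nat.lt_pow_succ_log_self (by norm_num) _
  have hcast : ((2 ^ (j.natAbs + 1) : ℕ) : ℤ) = 2 ^ (j.natAbs + 1) := by push_cast; rfl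
  constructor <;> omega

lemma kLevel_add_two_pow_sub_one {n : ℤ} {j : ℕ} (hn : 0 ≤ n) (h : kLevel n ≤ j) :
    kLevel (n + (2 ^ (j + 1) - 1)) = j + 1 := by
  have hpow : ((2 ^ (j + 1) : ℕ) : ℤ) = 2 ^ (j + 1) := by push_cast; rfl
  have hlt : n.toNat + 1 < 2 ^ (j + 1) := by
    rw [kLevel_of_nonneg hn] at h
    exact Nat.lt_pow_of_log_lt (by norm_num) (by omega)
  have hshift : (n + (2 ^ (j + 1) - 1)).toNat + 1 = n.toNat + 2 ^ (j + 1) := by omega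
  rw [kLevel_of_nonneg (by omega), hshift, Nat.log_add_pow (by norm_num) (by omega)]
  push_cast
  rfl

lemma kLevel_sub_two_pow_sub_one {n : ℤ} {j : ℕ} (hn : n ≤ 0) (h : -j ≤ kLevel n) :
    kLevel (n - (2 ^ (j + 1) - 1)) = -(j + 1) := by
  have hneg := kLevel_add_two_pow_sub_one (n := -n) (j := j) (by omega)
    (by rw [kLevel_neg]; omega)
  rw [show -n + (2 ^ (j + 1) - 1) = -(n - (2 ^ (j + 1) - 1)) by ring, kLevel_neg] at hneg
  omega

lemma ncard_le_ncard_preimage_kLevel {F : Set ℤ} {m K : ℤ} (hm : ∀ a ∈ F, m ≤ kLevel a)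
    (hK : ∀ a ∈ F, kLevel a ≤ K) : F.ncard ≤ (kLevel ⁻¹' {m - 1, K + 1}).ncard := by
  have hP : (0 : ℤ) < 2 ^ (K.toNat + 1) := by positivity
  have hQ : (0 : ℤ) < 2 ^ ((-m).toNat + 1) := by positivity
  let shift : ℤ → ℤ := fun n =>
    if 0 ≤ n then n + (2 ^ (K.toNat + 1) - 1) else n - (2 ^ ((-m).toNat + 1) - 1)
  have hshift : StrictMono shift := by
    intro a b hab
    simp only [shift]
    split_ifs <;> omega
  refine Set.ncard_le_ncard_of_injOn shift (fun a ha => ?_) hshift.injective.injOn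
    (finite_preimage_kLevel (Set.toFinite _))
  by_cases h0 : 0 ≤ a
  · have hK0 := (kLevel_nonneg h0).trans (hK a ha)
    right
    show kLevel (shift a) = K + 1
    simp only [shift, if_pos h0]
    rw [kLevel_add_two_pow_sub_one h0 (by have := hK a ha; omega)]
    omega
  · have hm0 := (hm a ha).trans (kLevel_nonpos (by omega))
    left
    show kLevel (shift a) = m - 1
    simp only [shift, if_neg h0]
    rw [kLevel_sub_two_pow_sub_one (by omega) (by have := hm a ha; omega)]
    omega

section rBoundary

variable {X : Type*} [MetricSpace X] {R : ℝ} {Y : Set X}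

lemma mem_rBoundary_of_dist_lt {x y : X} (hy : y ∈ Y) (hx : x ∉ Y) (hxy : dist x y < R) :
    x ∈ rBoundary R Y :=
  ⟨(infDist_le_dist_of_mem hy).trans_lt hxy,
    by rw [infDist_zero_of_mem hx]; exact dist_nonneg.trans_lt hxy⟩

lemma isBounded_rBoundary (hb : IsBounded Y) (hY : Y.Nonempty) : IsBounded (rBoundary R Y) :=
  hb.thickening.subset fun _ hx => (mem_thickening_iff_infDist_lt hY).mpr hx.1

lemma not_hasFoelnerProp_of_mul_ncard_le {c : ℝ} (hR : 0 < R) (hc : 0 < c)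
    (h : ∀ F : Set X, F.Finite → F.Nonempty → c * F.ncard ≤ (rBoundary R F).ncard) :
    ¬ HasFoelnerProp X := by
  intro hF
  obtain ⟨F, hfin, hne, hlt⟩ := hF R hR c hc
  exact (h F hfin hne).not_gt hlt

end rBoundary

namespace ZExp

lemma dist_eq (x y : ZExp) :
    dist x y = if x = y then 0 else ((|kLevel x - kLevel y| : ℤ) : ℝ) + 1 := rfl

lemma abs_kLevel_sub_le_dist (x y : ZExp) : ((|kLevel x - kLevel y| : ℤ) : ℝ) ≤ dist x y := by
  rw [dist_eq]
  split_ifs with h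
  · simp [h]
  · linarith

lemma dist_lt_three {x y : ZExp} (h : |kLevel x - kLevel y| ≤ 1) : dist x y < 3 := by
  have hcast : ((|kLevel x - kLevel y| : ℤ) : ℝ) ≤ 1 := by exact_mod_cast h
  rw [dist_eq]
  split_ifs <;> linarith

lemma finite_of_isBounded {s : Set ZExp} (hs : IsBounded s) : s.Finite := by
  obtain ⟨r, hr⟩ := hs.subset_closedBall (toZExp 0)
  refine (finite_preimage_kLevel (Set.finite_Icc (-⌈r⌉) ⌈r⌉)).subset fun x hx => ?_
  have hdist := (abs_kLevel_sub_le_dist x (toZExp 0)).trans (mem_closedBall.mp (hr hx))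
  have hk0 : kLevel (toZExp 0) = 0 := by simp [toZExp, kLevel]
  rw [hk0, sub_zero] at hdist
  exact abs_le.mp (Int.cast_le.mp (hdist.trans (Int.le_ceil r)))

lemma ncard_le_ncard_rBoundary_three {F : Set ZExp} (hF : F.Finite) (hne : F.Nonempty) :
    F.ncard ≤ (rBoundary 3 F).ncard := by
  obtain ⟨yK, hyK, hK⟩ := Set.exists_max_image F kLevel hF hne
  obtain ⟨ym, hym, hm⟩ := Set.exists_min_image F kLevel hF hne
  have houter : ∀ x : ZExp, kLevel x ∈ ({kLevel ym - 1, kLevel yK + 1} : Set ℤ) →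
      x ∈ rBoundary 3 F := by
    rintro x (hx | hx)
    · exact mem_rBoundary_of_dist_lt hym (fun h => by have := hm x h; omega)
        (dist_lt_three (by rw [hx]; norm_num))
    · rw [Set.mem_singleton_iff] at hx
      exact mem_rBoundary_of_dist_lt hyK (fun h => by have := hK x h; omega)
        (dist_lt_three (by rw [hx]; norm_num))
  calc F.ncard ≤ (kLevel ⁻¹' {kLevel ym - 1, kLevel yK + 1}).ncard :=
        ncard_le_ncard_preimage_kLevel (F := F) hm hK
    _ ≤ (rBoundary 3 F).ncard :=
        Set.ncard_le_ncard (α := ZExp) houter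
          (finite_of_isBounded (isBounded_rBoundary hF.isBounded hne))

end ZExp

/-- The space `ℤ` with the metric `d(n,m) = |k(n) − k(m)| + 1`
(`n ≠ m`) does not satisfy the Følner property: there is an `R > 0` such that every
finite nonempty subset `F` satisfies `|∂_R F| ≥ |F|/4`. -/
theorem zExp_not_foelner :
    ¬ HasFoelnerProp ZExp ∧
    ∃ R : ℝ, 0 < R ∧ ∀ F : Set ZExp, F.Finite → F.Nonempty →
      (F.ncard : ℝ) / 4 ≤ ((rBoundary R F).ncard : ℝ) := by
  have hbound : ∀ F : Set ZExp, F.Finite → F.Nonempty →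
      (1 / 4 : ℝ) * F.ncard ≤ (rBoundary 3 F).ncard := fun F hF hne => by
    have h : (F.ncard : ℝ) ≤ (rBoundary 3 F).ncard := by
      exact_mod_cast ZExp.ncard_le_ncard_rBoundary_three hF hne
    have : (0 : ℝ) ≤ F.ncard := by positivity
    linarith
  refine ⟨not_hasFoelnerProp_of_mul_ncard_le (by norm_num) (by norm_num) hbound, 3, by norm_num,
    fun F hF hne => ?_⟩
  linarith [hbound F hF hne]
end
end

section
/- Let X = ℤ with the metric d(n,m) = |k(n) − k(m)| + 1 for n ≠ m (and d(n,n) = 0), where k(n) = ⌊log₂(|n|+1)⌋ for n ≥ 0 and k(n) = −⌊log₂(|n|+1)⌋ for n < 0, and let β : ℤ → ℤ be β(n) = ⌊n/2⌋ (integer floor division). Then: (1) for every n ∈ ℤ, the preimage β⁻¹({n}) = {2n, 2n+1} consists of exactly two points; and (2) d(β(n), n) ≤ 2 for every n ∈ ℤ. -/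
noncomputable section

theorem Nat.log_le_log_add_one_of_le_mul {b x y : ℕ} (h : x ≤ b * y) :
    Nat.log b x ≤ Nat.log b y + 1 := by
  rcases Nat.eq_zero_or_pos y with rfl | hy
  · simp_all
  rcases le_or_gt b 1 with hb | hb
  · simp [Nat.log_of_left_le_one hb]
  calc Nat.log b x ≤ Nat.log b (y * b) := Nat.log_mono_right (by rwa [mul_comm])
    _ = Nat.log b y + 1 := Nat.log_mul_base hb hy.ne'

theorem Int.preimage_ediv_two_singleton (n : ℤ) :
    (fun m : ℤ => m / 2) ⁻¹' {n} = {2 * n, 2 * n + 1} := by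
  ext m
  simp only [Set.mem_preimage, Set.mem_singleton_iff, Set.mem_insert_iff]
  omega

theorem abs_kLevel_sub_kLevel_of_nonneg_iff {m n : ℤ} (h : 0 ≤ m ↔ 0 ≤ n) :
    |kLevel m - kLevel n| = |(Nat.log 2 (m.natAbs + 1) : ℤ) - Nat.log 2 (n.natAbs + 1)| := by
  by_cases hn : 0 ≤ n
  · simp only [kLevel, if_pos hn, if_pos (h.mpr hn)]
  · simp only [kLevel, if_neg hn, if_neg (mt h.mp hn)]
    rw [neg_sub_neg, abs_sub_comm]

/-- Halving changes `|n| + 1` by a factor between `1` and `2` and preserves the sign, so it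
moves the level by at most one. -/
theorem abs_kLevel_ediv_two_sub_kLevel_le_one (n : ℤ) : |kLevel (n / 2) - kLevel n| ≤ 1 := by
  rw [abs_kLevel_sub_kLevel_of_nonneg_iff (by omega), abs_le]
  have hlower := Nat.log_mono_right (b := 2)
    (show (n / 2).natAbs + 1 ≤ n.natAbs + 1 by omega)
  have hupper := Nat.log_le_log_add_one_of_le_mul (b := 2)
    (show n.natAbs + 1 ≤ 2 * ((n / 2).natAbs + 1) by omega)
  omega

theorem dist_toZExp_le (m n : ℤ) :
    dist (toZExp m) (toZExp n) ≤ ((|kLevel m - kLevel n| : ℤ) : ℝ) + 1 := by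
  change (if toZExp m = toZExp n then (0 : ℝ) else _) ≤ _
  split_ifs
  · positivity
  · exact le_rfl

/-- For `ℤ` with the metric `d(n,m) = |k(n) − k(m)| + 1` (`n ≠ m`)
and `β(n) = ⌊n/2⌋`: (1) every fiber `β⁻¹({n}) = {2n, 2n+1}` has exactly two points, and
(2) `d(β(n), n) ≤ 2` for all `n`. -/
theorem zExp_halving_map_properties :
    (∀ n : ℤ, (fun m : ℤ => m / 2) ⁻¹' {n} = {2 * n, 2 * n + 1} ∧
      ((fun m : ℤ => m / 2) ⁻¹' {n}).ncard = 2) ∧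
    (∀ n : ℤ, dist (toZExp (n / 2)) (toZExp n) ≤ 2) := by
  refine ⟨fun n => ⟨Int.preimage_ediv_two_singleton n, ?_⟩, fun n => ?_⟩
  · rw [Int.preimage_ediv_two_singleton, Set.ncard_pair (by omega)]
  · have hlevel : ((|kLevel (n / 2) - kLevel n| : ℤ) : ℝ) ≤ 1 := by
      exact_mod_cast abs_kLevel_ediv_two_sub_kLevel_le_one n
    linarith [dist_toZExp_le (n / 2) n]
end
end
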